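/- Let θ ≥ 1, c_i > 0, d_j > 0 be integers, and let e, ℓ_i, u_j be integers with c_i·e ≥ ℓ_i and d_j·e ≤ u_j. Let ρ = (c_i·e − ℓ_i) mod (θ·c_i). Then d_j·(ℓ_i + ρ) ≤ c_i·u_j, i.e., the substitution of (ℓ_i + ρ)/c_i for e preserves the upper-bound constraint d_j·e ≤ u_j after clearing denominators. -/
import Mathlib

theorem stmt_11 (θ ci dj e ℓi uj : ℤ) (hθ : 1 ≤ θ) (hci : 0 < ci) (hdj : 0 < dj)
    (hl : ci * e ≥ ℓi) (hu : dj * e ≤ uj)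
    (ρ : ℤ) (hρ : ρ = (ci * e - ℓi) % (θ * ci)) :
    dj * (ℓi + ρ) ≤ ci * uj := by
  have hm : 0 < θ * ci := mul_pos (by linarith) hci
  have hdivnn : 0 ≤ (ci * e - ℓi) / (θ * ci) :=
    Int.ediv_nonneg (by linarith) hm.le
  have hρle : ρ ≤ ci * e - ℓi := by
    rw [hρ, Int.emod_def]
    nlinarith
  have h1 : dj * (ℓi + ρ) ≤ dj * (ci * e) := by nlinarith
  nlinarith
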